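/- arXiv:0902.3517 — 2 statements merged into one kernel-verified Lean document; each statement's English description precedes it below -/
import Mathlib

section
/- Let k ≥ 2 be a real number, and let A, A_f, A_p, OPT, OPT_f, OPT_p be nonnegative real numbers satisfying: (i) A = A_f + A_p, (ii) OPT = OPT_f + OPT_p, (iii) A_p + k·A_f ≤ (k−1)·OPT_p + k·OPT_f, (iv) A_p ≤ 2·OPT_p, and (v) A_p ≤ OPT. Then A ≤ (2 − 3/(2k))·OPT. -/
/-- Arithmetic core of the (2 - 3/(2k))-approximation bound for SPT on UCCP. -/
theorem spt_approx_arithmetic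
    (k A Af Ap OPT OPTf OPTp : ℝ)
    (hk : 2 ≤ k)
    (hA : 0 ≤ A) (hAf : 0 ≤ Af) (hAp : 0 ≤ Ap)
    (hOPT : 0 ≤ OPT) (hOPTf : 0 ≤ OPTf) (hOPTp : 0 ≤ OPTp)
    (hsplitA : A = Af + Ap)
    (hsplitOPT : OPT = OPTf + OPTp)
    (hmove : Ap + k * Af ≤ (k - 1) * OPTp + k * OPTf)
    (hpartial : Ap ≤ 2 * OPTp)
    (htrivial : Ap ≤ OPT) :
    A ≤ (2 - 3 / (2 * k)) * OPT := by
  have hk0 : (0:ℝ) < 2 * k := by linarith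
  have h1 : 2 * k * A ≤ (4 * k - 3) * OPT := by
    have h2 := mul_le_mul_of_nonneg_left htrivial (by linarith : (0:ℝ) ≤ 2 * k - 3)
    have h3 := mul_le_mul_of_nonneg_left hmove (by norm_num : (0:ℝ) ≤ 2)
    nlinarith
  have hk' : k ≠ 0 := by linarith
  have heq : (2 - 3 / (2 * k)) * OPT = (4 * k - 3) * OPT / (2 * k) := by
    field_simp
    ring_nf
  rw [heq, le_div_iff₀ hk0]
  linarith
end

section
/- For every real number ε > 0, there exists a natural number ℓ such that, with k = ℓ!, the inequality 2·k²·ℓ − k²·log ℓ > (2 − ε)·(k²·ℓ + k·ℓ²) holds, where log denotes the natural logarithm. -/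
/-- For every `ε > 0` there is an instance `E_ℓ` (with `k = ℓ!`) on which the
restricted-solution lower bound exceeds `(2 − ε)` times the unrestricted upper bound. -/
theorem no_two_minus_eps_approx (ε : ℝ) (hε : 0 < ε) :
    ∃ ℓ : ℕ,
      (2 - ε) * ((Nat.factorial ℓ : ℝ) ^ 2 * ℓ + (Nat.factorial ℓ : ℝ) * (ℓ : ℝ) ^ 2)
        < 2 * (Nat.factorial ℓ : ℝ) ^ 2 * ℓ - (Nat.factorial ℓ : ℝ) ^ 2 * Real.log ℓ := by
  have hc : (0:ℝ) < ε / 2 := by linarith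
  obtain ⟨M, hM⟩ := Filter.eventually_atTop.1
    (Real.isLittleO_log_id_atTop.def hc)
  obtain ⟨n, hn⟩ := exists_nat_ge (max M (4 / ε + 2))
  set ℓ : ℕ := n + 2 with hℓ
  refine ⟨ℓ, ?_⟩
  have hℓR : (ℓ : ℝ) = (n : ℝ) + 2 := by push_cast [hℓ]; ring
  have hℓ2 : (2:ℝ) ≤ (ℓ : ℝ) := by
    have h0 : (0:ℝ) ≤ (n:ℝ) := Nat.cast_nonneg n
    rw [hℓR]; linarith
  have hℓM : M ≤ (ℓ : ℝ) := by
    have := le_trans (le_max_left M (4/ε + 2)) hn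
    rw [hℓR]; linarith
  have hℓε : 4 / ε + 2 ≤ (ℓ : ℝ) := by
    have := le_trans (le_max_right M (4/ε + 2)) hn
    rw [hℓR]; linarith
  -- log bound
  have hlog : Real.log ℓ ≤ (ε / 2) * ℓ := by
    have h := hM (ℓ : ℝ) hℓM
    have hpos : (0:ℝ) ≤ (ℓ:ℝ) := by linarith
    calc Real.log ℓ ≤ ‖Real.log ℓ‖ := by rw [Real.norm_eq_abs]; exact le_abs_self _
      _ ≤ (ε/2) * ‖(ℓ:ℝ)‖ := h
      _ = (ε/2) * ℓ := by rw [Real.norm_eq_abs, abs_of_nonneg hpos]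
  -- factorial bound : ℓ * (ℓ - 1) ≤ ℓ!
  set k : ℝ := (Nat.factorial ℓ : ℝ) with hk
  have hfac : (ℓ : ℝ) * ((ℓ : ℝ) - 1) ≤ k := by
    have h1 : ℓ * (ℓ - 1) ≤ Nat.factorial ℓ := by
      calc ℓ * (ℓ - 1) ≤ ℓ * Nat.factorial (ℓ - 1) :=
            Nat.mul_le_mul_left _ (Nat.self_le_factorial _)
        _ = Nat.factorial ℓ := by
            have : ℓ = (ℓ - 1) + 1 := by omega
            rw [this]; simp [Nat.factorial_succ]
    have h2 : ((ℓ * (ℓ - 1) : ℕ) : ℝ) ≤ k := by rw [hk]; exact_mod_cast h1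
    have h3 : ((ℓ - 1 : ℕ) : ℝ) = (ℓ : ℝ) - 1 := by
      have : 1 ≤ ℓ := by omega
      push_cast [this]; ring
    calc (ℓ : ℝ) * ((ℓ : ℝ) - 1) = ((ℓ * (ℓ - 1) : ℕ) : ℝ) := by push_cast [h3]; ring
      _ ≤ k := h2
  have hk1 : (1:ℝ) ≤ k := by rw [hk]; exact_mod_cast Nat.one_le_iff_ne_zero.2 (Nat.factorial_ne_zero ℓ)
  -- 2ℓ ≤ (ε/2) k
  have h2ℓ : 2 * (ℓ : ℝ) ≤ (ε / 2) * k := by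
    have h4 : 4 / ε ≤ (ℓ:ℝ) - 1 := by linarith
    have h5 : 4 ≤ ε * ((ℓ:ℝ) - 1) := by
      have := (div_le_iff₀ hε).1 h4
      linarith
    have h6 : 2 * (ℓ:ℝ) ≤ (ε/2) * ((ℓ:ℝ) * ((ℓ:ℝ) - 1)) := by nlinarith
    have h7 : (ε/2) * ((ℓ:ℝ) * ((ℓ:ℝ) - 1)) ≤ (ε/2) * k :=
      mul_le_mul_of_nonneg_left hfac (le_of_lt hc)
    linarith
  have hkpos : (0:ℝ) < k := by linarith
  have hA : k ^ 2 * Real.log ℓ ≤ k ^ 2 * ((ε/2) * ℓ) :=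
    mul_le_mul_of_nonneg_left hlog (by positivity)
  have hB : 2 * k * (ℓ:ℝ)^2 ≤ (ε/2) * k ^ 2 * ℓ := by
    have := mul_le_mul_of_nonneg_right h2ℓ (mul_nonneg (le_of_lt hkpos) (by linarith : (0:ℝ) ≤ (ℓ:ℝ)))
    nlinarith
  nlinarith [sq_nonneg k, mul_pos (mul_pos hε hkpos) (by nlinarith : (0:ℝ) < (ℓ:ℝ)^2)]
end
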